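/- arXiv:1710.00996 — 5 statements merged into one kernel-verified Lean document; each statement's English description precedes it below -/
import Mathlib

section
/- Let G : ℝ^n → ℝ be Lipschitz continuous (with respect to any norm), let u > 0, and let G_μ(x) = E_{z∼μ(u)}[G(x + z)] where μ(u) is the uniform distribution on the ℓ∞ ball of radius u. Then G_μ is differentiable at every point x ∈ ℝ^n, and its gradient satisfies ∇G_μ(x) = E_{z∼μ(u)}[∇G(x + z)], where ∇G exists Lebesgue-almost everywhere by Rademacher's theorem. -/
/-!
Each translate `x ↦ G (x + z)` is `K`-Lipschitz, so its difference quotients are dominated by the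
constant `K`, which is integrable against a finite measure; by Rademacher's theorem it is
differentiable at `x₀` with derivative `fderiv G (x₀ + z)` for almost every `z`. Differentiating
under the integral sign then gives the formula.
-/

open MeasureTheory

/-- The smoothed version of `G`: the average of `G` over the ℓ∞ ball of radius `u`
centered at `x` (note the sup norm is the norm of the Pi space `Fin n → ℝ`). -/
noncomputable def smoothed {n : ℕ} (G : (Fin n → ℝ) → ℝ) (u : ℝ) (x : Fin n → ℝ) : ℝ :=
  ((2 * u) ^ n)⁻¹ * ∫ z in Metric.closedBall (0 : Fin n → ℝ) u, G (x + z)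

section
variable {E F : Type*} [NormedAddCommGroup E] [NormedSpace ℝ E] [FiniteDimensional ℝ E]
  [MeasurableSpace E] [BorelSpace E] [NormedAddCommGroup F] [NormedSpace ℝ F]
  [FiniteDimensional ℝ F] {G : E → F} {K : NNReal} {μ ν : Measure E} [μ.IsAddHaarMeasure]

theorem LipschitzWith.ae_hasFDerivAt_comp_add (hG : LipschitzWith K G) (hν : ν ≪ μ) (x₀ : E) :
    ∀ᵐ z ∂ν, HasFDerivAt (fun x ↦ G (x + z)) (fderiv ℝ G (x₀ + z)) x₀ := by
  have hdiff : ∀ᵐ z ∂μ, DifferentiableAt ℝ G (x₀ + z) :=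
    (measurePreserving_add_left μ x₀).quasiMeasurePreserving.tendsto_ae.eventually
      hG.ae_differentiableAt
  filter_upwards [hν.ae_le hdiff] with z hz
  exact (hasFDerivAt_comp_add_right z).2 hz.hasFDerivAt

theorem LipschitzWith.hasFDerivAt_integral_comp_add [IsFiniteMeasure ν] (hG : LipschitzWith K G)
    (hν : ν ≪ μ) {x₀ : E} (hint : Integrable (fun z ↦ G (x₀ + z)) ν) :
    HasFDerivAt (fun x ↦ ∫ z, G (x + z) ∂ν) (∫ z, fderiv ℝ G (x₀ + z) ∂ν) x₀ := by
  have hlip : ∀ z, LipschitzWith K fun x ↦ G (x + z) := fun z ↦ by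
    simpa [Function.comp_def] using hG.comp (isometry_add_right z).lipschitz
  have hmeas : ∀ x, AEStronglyMeasurable (fun z ↦ G (x + z)) ν := fun x ↦
    (hG.continuous.comp (continuous_const_add x)).aestronglyMeasurable
  have hmeas' : AEStronglyMeasurable (fun z ↦ fderiv ℝ G (x₀ + z)) ν :=
    ((measurable_fderiv ℝ G).comp (measurable_const_add x₀)).aestronglyMeasurable
  exact (hasFDerivAt_integral_of_dominated_loc_of_lip (bound := fun _ ↦ (K : ℝ))
    Filter.univ_mem (.of_forall hmeas) hint hmeas' (.of_forall fun z ↦ by simpa using hlip z)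
    (integrable_const _) (hG.ae_hasFDerivAt_comp_add hν x₀)).2

end

theorem stmt_5_general {n : ℕ} (G : (Fin n → ℝ) → ℝ) (K : NNReal) (hLip : LipschitzWith K G)
    (u : ℝ) :
    ∀ x : Fin n → ℝ,
      DifferentiableAt ℝ (smoothed G u) x ∧
      fderiv ℝ (smoothed G u) x =
        ((2 * u) ^ n)⁻¹ •
          ∫ z in Metric.closedBall (0 : Fin n → ℝ) u, fderiv ℝ G (x + z) := by
  intro x₀
  have hball : IsCompact (Metric.closedBall (0 : Fin n → ℝ) u) := isCompact_closedBall 0 u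
  have : IsFiniteMeasure (volume.restrict (Metric.closedBall (0 : Fin n → ℝ) u)) :=
    isFiniteMeasure_restrict.2 hball.measure_lt_top.ne
  have hderiv : HasFDerivAt (smoothed G u)
      (((2 * u) ^ n)⁻¹ • ∫ z in Metric.closedBall 0 u, fderiv ℝ G (x₀ + z)) x₀ :=
    (hLip.hasFDerivAt_integral_comp_add Measure.restrict_le_self.absolutelyContinuous
      ((hLip.continuous.comp (continuous_const_add x₀)).continuousOn.integrableOn_compact
        hball)).const_mul _
  exact ⟨hderiv.differentiableAt, hderiv.fderiv⟩

/-- If `G : ℝ^n → ℝ` is Lipschitz and `u > 0`, then the smoothed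
function `G_μ(x) = E_{z ∼ μ(u)}[G(x + z)]` (uniform `z` over the ℓ∞ ball of radius
`u`) is differentiable at every point, with gradient `∇G_μ(x) = E_{z∼μ(u)}[∇G(x+z)]`.
(`G` is differentiable a.e. by Rademacher; Mathlib's `fderiv` takes the junk value `0`
on the measure-zero set where `G` is not differentiable, so the expectation of the
gradient is well defined.) -/
theorem stmt_5 {n : ℕ} (G : (Fin n → ℝ) → ℝ) (K : NNReal) (hLip : LipschitzWith K G)
    (u : ℝ) (hu : 0 < u) :
    ∀ x : Fin n → ℝ,
      DifferentiableAt ℝ (smoothed G u) x ∧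
      fderiv ℝ (smoothed G u) x =
        ((2 * u) ^ n)⁻¹ •
          ∫ z in Metric.closedBall (0 : Fin n → ℝ) u, fderiv ℝ G (x + z) :=
  stmt_5_general G K hLip u
end

section
/- Let u > 0 and for c ∈ ℝ^n let B(c) = {z ∈ ℝ^n : ‖z − c‖_∞ ≤ u} be the ℓ∞ ball of radius u centered at c, which has Lebesgue measure (2u)^n. Then for all x, y ∈ ℝ^n, the uniform densities on B(x) and B(y) satisfy ∫_{ℝ^n} |(2u)^{-n} 1_{B(x)}(z) − (2u)^{-n} 1_{B(y)}(z)| dz ≤ ‖x − y‖₁ / u; equivalently, the Lebesgue measure of the symmetric difference B(x) Δ B(y) is at most (2u)^n ‖x − y‖₁ / u. -/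
/-!
Both balls are boxes of volume `V = (2u)^n`, and their intersection is the box with side lengths
`(2u - |x i - y i|)⁺`, so `vol (B(x) Δ B(y)) = 2 (V - ∏ i, (2u - |x i - y i|)⁺)`. The elementary
bound `a^n - ∏ b i ≤ a^(n-1) ∑ (a - b i)` for `0 ≤ b i ≤ a`, applied with `a = 2u`, bounds this by
`V ‖x - y‖₁ / u`. The two uniform densities differ by `V⁻¹` exactly on `B(x) Δ B(y)`, so their
`L¹` distance is that volume divided by `V`.
-/
open MeasureTheory Metric Finset
open scoped symmDiff

theorem mul_pow_card_sub_prod_le {R ι : Type*} [CommRing R] [LinearOrder R] [IsStrictOrderedRing R]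
    (s : Finset ι) {a : R} {b : ι → R} (hb₀ : ∀ i ∈ s, 0 ≤ b i) (hba : ∀ i ∈ s, b i ≤ a) :
    a * (a ^ #s - ∏ i ∈ s, b i) ≤ a ^ #s * ∑ i ∈ s, (a - b i) := by
  induction s using Finset.cons_induction with
  | empty => simp
  | cons i s hi ih =>
    simp only [forall_mem_cons] at hb₀ hba
    have ha : 0 ≤ a := hb₀.1.trans hba.1
    have hprod : ∏ j ∈ s, b j ≤ a ^ #s := (prod_le_prod hb₀.2 hba.2).trans_eq (prod_const a)
    rw [card_cons, prod_cons, sum_cons, pow_succ]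
    calc a * (a ^ #s * a - b i * ∏ j ∈ s, b j)
        = a * (a * (a ^ #s - ∏ j ∈ s, b j)) + (a - b i) * (a * ∏ j ∈ s, b j) := by ring
      _ ≤ a * (a ^ #s * ∑ j ∈ s, (a - b j)) + (a - b i) * (a * a ^ #s) :=
        add_le_add (mul_le_mul_of_nonneg_left (ih hb₀.2 hba.2) ha)
          (mul_le_mul_of_nonneg_left (mul_le_mul_of_nonneg_left hprod ha) (sub_nonneg.2 hba.1))
      _ = a ^ #s * a * (a - b i + ∑ j ∈ s, (a - b j)) := by ring

theorem Real.volume_closedBall_inter_closedBall (a b r : ℝ) :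
    volume (closedBall a r ∩ closedBall b r) = ENNReal.ofReal (2 * r - |a - b|) := by
  rw [Real.closedBall_eq_Icc, Real.closedBall_eq_Icc, Set.Icc_inter_Icc, Real.volume_Icc,
    ← max_sub_min_eq_abs']
  congr 1
  rw [max_sub_sub_right, min_add_add_right]
  ring

theorem Real.volume_pi_closedBall_inter_closedBall {ι : Type*} [Fintype ι] (x y : ι → ℝ) {r : ℝ}
    (hr : 0 ≤ r) :
    volume (closedBall x r ∩ closedBall y r) = ∏ i, ENNReal.ofReal (2 * r - |x i - y i|) := by
  rw [closedBall_pi x hr, closedBall_pi y hr, ← Set.pi_inter_distrib, volume_pi_pi]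
  simp only [Real.volume_closedBall_inter_closedBall]

theorem measureReal_symmDiff_eq_of_measure_eq {α : Type*} [MeasurableSpace α] {μ : Measure α}
    {s t : Set α} (hs : MeasurableSet s) (ht : MeasurableSet t) (hst : μ s = μ t)
    (hfin : μ s ≠ ⊤) : μ.real (s ∆ t) = 2 * (μ.real s - μ.real (s ∩ t)) := by
  have hfin' : μ t ≠ ⊤ := hst ▸ hfin
  have h₁ : μ.real (s \ t) + μ.real (s ∩ t) = μ.real s := measureReal_sdiff_add_inter ht hfin
  have h₂ : μ.real (t \ s) + μ.real (s ∩ t) = μ.real s := by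
    rw [Set.inter_comm, measureReal_def μ s, hst]
    exact measureReal_sdiff_add_inter hs hfin'
  rw [measureReal_symmDiff_eq hs ht hfin hfin']
  linarith

theorem integral_abs_indicator_sub_indicator {α : Type*} [MeasurableSpace α] (μ : Measure α)
    {s t : Set α} (hs : MeasurableSet s) (ht : MeasurableSet t) (c : ℝ) :
    ∫ z, |s.indicator (fun _ => c) z - t.indicator (fun _ => c) z| ∂μ = μ.real (s ∆ t) * |c| := by
  have hintegrand : (fun z => |s.indicator (fun _ => c) z - t.indicator (fun _ => c) z|) =
      (s ∆ t).indicator fun _ => |c| := by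
    classical
    ext z
    rw [← Set.apply_indicator_symmDiff abs_neg, Set.indicator_apply, Set.indicator_apply]
    split_ifs <;> simp
  rw [hintegrand, integral_indicator_const _ (hs.symmDiff ht), smul_eq_mul]

theorem Real.measureReal_pi_closedBall_symmDiff_le {ι : Type*} [Fintype ι] (x y : ι → ℝ) {u : ℝ}
    (hu : 0 < u) :
    volume.real (closedBall x u ∆ closedBall y u) ≤
      (2 * u) ^ Fintype.card ι * (∑ i, |x i - y i|) / u := by
  have hball (c : ι → ℝ) : volume (closedBall c u) = ENNReal.ofReal ((2 * u) ^ Fintype.card ι) :=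
    Real.volume_pi_closedBall c hu.le
  have hinter : volume.real (closedBall x u ∩ closedBall y u) =
      ∏ i, max (2 * u - |x i - y i|) 0 := by
    rw [measureReal_def, Real.volume_pi_closedBall_inter_closedBall x y hu.le, ENNReal.toReal_prod]
    simp only [ENNReal.toReal_ofReal']
  have hkey := mul_pow_card_sub_prod_le univ (a := 2 * u)
    (b := fun i => max (2 * u - |x i - y i|) 0) (fun _ _ => le_max_right _ _)
    (fun i _ => max_le (by linarith [abs_nonneg (x i - y i)]) (by linarith))
  rw [measureReal_symmDiff_eq_of_measure_eq measurableSet_closedBall measurableSet_closedBall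
    (by rw [hball, hball]) measure_closedBall_lt_top.ne, hinter, measureReal_def, hball,
    ENNReal.toReal_ofReal (by positivity), le_div_iff₀ hu]
  rw [card_univ] at hkey
  calc 2 * ((2 * u) ^ Fintype.card ι - ∏ i, max (2 * u - |x i - y i|) 0) * u
      = 2 * u * ((2 * u) ^ Fintype.card ι - ∏ i, max (2 * u - |x i - y i|) 0) := by ring
    _ ≤ (2 * u) ^ Fintype.card ι * ∑ i, (2 * u - max (2 * u - |x i - y i|) 0) := hkey
    _ ≤ (2 * u) ^ Fintype.card ι * ∑ i, |x i - y i| := by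
      gcongr with i
      linarith [le_max_left (2 * u - |x i - y i|) 0]

/-- For `u > 0` let `B(c)` be the ℓ∞ ball of radius `u` centered at
`c` in `ℝ^n` (the closed ball for the sup norm of the Pi space `Fin n → ℝ`), which has
Lebesgue measure `(2u)^n`. Then the L¹ distance between the uniform densities on
`B(x)` and `B(y)` is at most `‖x - y‖₁ / u`; equivalently, the Lebesgue measure of the
symmetric difference `B(x) Δ B(y)` is at most `(2u)^n ‖x - y‖₁ / u`. -/
theorem stmt_7 {n : ℕ} (u : ℝ) (hu : 0 < u) (x y : Fin n → ℝ) :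
    (∫ z : Fin n → ℝ,
        |(Metric.closedBall x u).indicator (fun _ => ((2 * u) ^ n)⁻¹) z -
          (Metric.closedBall y u).indicator (fun _ => ((2 * u) ^ n)⁻¹) z|) ≤
      (∑ i, |x i - y i|) / u ∧
    volume (symmDiff (Metric.closedBall x u) (Metric.closedBall y u)) ≤
      ENNReal.ofReal ((2 * u) ^ n * (∑ i, |x i - y i|) / u) := by
  have hV : 0 < (2 * u) ^ n := by positivity
  have hbound := Real.measureReal_pi_closedBall_symmDiff_le x y hu
  rw [Fintype.card_fin] at hbound
  constructor
  · rw [integral_abs_indicator_sub_indicator _ measurableSet_closedBall measurableSet_closedBall,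
      abs_of_pos (inv_pos.2 hV)]
    calc volume.real (closedBall x u ∆ closedBall y u) * ((2 * u) ^ n)⁻¹
        ≤ (2 * u) ^ n * (∑ i, |x i - y i|) / u * ((2 * u) ^ n)⁻¹ := by gcongr
      _ = (∑ i, |x i - y i|) / u := by field_simp
  · rw [← ofReal_measureReal (measure_symmDiff_ne_top measure_closedBall_lt_top.ne
      measure_closedBall_lt_top.ne)]
    exact ENNReal.ofReal_le_ofReal hbound
end

section
/- Let G : ℝ^n → ℝ be continuously differentiable with coordinatewise antitone gradient (i.e., ∇G(a) ⪰ ∇G(b) coordinatewise whenever a ⪯ b coordinatewise; this is the DR-submodularity property). Then for every x ∈ ℝ^n and every x* ∈ ℝ^n with x* ⪰ 0 coordinatewise, G(x* + x) − G(x) ≤ ⟨∇G(x), x*⟩. -/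
theorem ContinuousLinearMap.apply_le_apply_of_single_le {ι : Type*} [Fintype ι] [DecidableEq ι]
    {L₁ L₂ : (ι → ℝ) →L[ℝ] ℝ} (h : ∀ i, L₁ (Pi.single i 1) ≤ L₂ (Pi.single i 1))
    {v : ι → ℝ} (hv : 0 ≤ v) : L₁ v ≤ L₂ v := by
  have hv_sum : v = ∑ i, v i • Pi.single i 1 := by
    simp only [← Pi.single_smul', smul_eq_mul, mul_one, Finset.univ_sum_single]
  rw [hv_sum, map_sum, map_sum]
  gcongr with i
  simpa only [map_smul, smul_eq_mul] using mul_le_mul_of_nonneg_left (h i) (hv i)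

/-- If `G : ℝ^n → ℝ` is continuously differentiable with
coordinatewise antitone gradient (DR-submodularity), then for every `x` and every
`x* ⪰ 0`, `G(x* + x) - G(x) ≤ ⟨∇G(x), x*⟩`. -/
theorem stmt_9 {n : ℕ} (G : (Fin n → ℝ) → ℝ) (hG : ContDiff ℝ 1 G)
    (hanti : ∀ a b : Fin n → ℝ, a ≤ b → ∀ i : Fin n,
      fderiv ℝ G b (Pi.single i 1) ≤ fderiv ℝ G a (Pi.single i 1)) :
    ∀ x xstar : Fin n → ℝ, 0 ≤ xstar →
      G (xstar + x) - G x ≤ fderiv ℝ G x xstar := by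
  intro x xstar hxstar
  have hG_diff : Differentiable ℝ G := hG.differentiable one_ne_zero
  obtain ⟨z, hz, hmvt⟩ := domain_mvt (f := G) (s := Set.univ) (x := x) (y := xstar + x)
    (fun y _ => (hG_diff y).hasFDerivAt.hasFDerivWithinAt) convex_univ trivial trivial
  have hxz : x ≤ z := (segment_subset_Icc (le_add_of_nonneg_left hxstar) hz).1
  rw [hmvt, add_sub_cancel_right]
  exact ContinuousLinearMap.apply_le_apply_of_single_le (hanti x z hxz) hxstar
end

section
/- Let f : 2^X → ℝ be a monotone submodular function on a finite ground set X with f(∅) = 0, let p be any probability distribution over subsets of X, and let x ∈ [0,1]^X be its vector of marginals, x_j = Pr_{S∼p}[j ∈ S]. Then E_{S∼p}[f(S)] ≤ (e/(e−1)) · F(x), where F is the multilinear extension of f; that is, the correlation gap of any monotone submodular function is at most e/(e−1). -/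
/-!
Write `F` for the multilinear extension, `x` for the marginals of `p` and `c = E_p[f]`. Averaging
the set-function inequality `f S ≤ f R + ∑_{j ∈ S} (f (R ∪ {j}) - f R)` (monotonicity plus
submodularity) over `R` drawn independently with marginals `z` gives
`f S ≤ F z + ∑_{j ∈ S} (1 - z j) ∂_j F z ≤ F z + ∑_{j ∈ S} ∂_j F z`, and averaging over `S ∼ p` then gives `c ≤ F z + ⟨x, ∇F z⟩`.
Along the segment `φ t = F (t • x)` this reads `c ≤ φ t + φ' t`, so `e^t (φ t - c)` is
nondecreasing on `[0, 1]`; comparing `t = 0`, where `φ 0 = f ∅ = 0`, with `t = 1` yields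
`(e - 1) c ≤ e F x`.
-/

open Finset

/-- The multilinear extension of a set function `f` on ground set `Fin n`. -/
noncomputable def multilinearExt {n : ℕ} (f : Finset (Fin n) → ℝ) (x : Fin n → ℝ) : ℝ :=
  ∑ S : Finset (Fin n), f S * ((∏ j ∈ S, x j) * ∏ j ∈ Sᶜ, (1 - x j))

section SetFunction

variable {α : Type*} [DecidableEq α]

def marginalGain (f : Finset α → ℝ) (i : α) (S : Finset α) : ℝ :=
  f (insert i S) - f S

def IsSubmodular (f : Finset α → ℝ) : Prop :=
  ∀ A B : Finset α, A ⊆ B → ∀ i ∉ B, marginalGain f i B ≤ marginalGain f i A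

theorem marginalGain_of_mem {f : Finset α → ℝ} {i : α} {S : Finset α} (h : i ∈ S) :
    marginalGain f i S = 0 := by
  rw [marginalGain, insert_eq_of_mem h, sub_self]

theorem marginalGain_nonneg {f : Finset α → ℝ} (hf : Monotone f) (i : α) (S : Finset α) :
    0 ≤ marginalGain f i S :=
  sub_nonneg.mpr (hf (subset_insert i S))

theorem IsSubmodular.le_add_sum_marginalGain {f : Finset α → ℝ} (hf : IsSubmodular f)
    (R S : Finset α) : f (R ∪ S) ≤ f R + ∑ j ∈ S, marginalGain f j R := by
  induction S using Finset.induction_on with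
  | empty => simp
  | @insert k S hk ih =>
    have step : marginalGain f k (R ∪ S) ≤ marginalGain f k R := by
      by_cases hkR : k ∈ R
      · rw [marginalGain_of_mem hkR, marginalGain_of_mem (mem_union_left S hkR)]
      · exact hf R (R ∪ S) subset_union_left k (by simp [hkR, hk])
    rw [sum_insert hk, union_insert]
    linarith [show marginalGain f k (R ∪ S) = f (insert k (R ∪ S)) - f (R ∪ S) from rfl]

theorem Finset.sum_eq_sum_powerset_erase [Fintype α] {M : Type*} [AddCommMonoid M]
    (h : Finset α → M) (j : α) :
    ∑ S, h S = ∑ S ∈ (univ.erase j).powerset, (h S + h (insert j S)) := by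
  rw [sum_add_distrib, ← sum_powerset_insert (notMem_erase j univ), insert_erase (mem_univ j),
    powerset_univ]

end SetFunction

section IndepWeight

variable {α : Type*} [DecidableEq α]

/-- The probability that a random set with independent marginals `z` agrees with `S` on `s`. -/
noncomputable def indepWeight (z : α → ℝ) (s S : Finset α) : ℝ :=
  ∏ k ∈ s, if k ∈ S then z k else 1 - z k

theorem indepWeight_nonneg {z : α → ℝ} (hz : ∀ j, z j ∈ Set.Icc (0 : ℝ) 1) (s S : Finset α) :
    0 ≤ indepWeight z s S :=
  prod_nonneg fun k _ => by
    split_ifs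
    · exact (hz k).1
    · exact sub_nonneg.mpr (hz k).2

theorem indepWeight_insert_of_notMem (z : α → ℝ) {s : Finset α} {j : α} (hj : j ∉ s)
    (S : Finset α) : indepWeight z s (insert j S) = indepWeight z s S :=
  prod_congr rfl fun k hk => by simp only [mem_insert, ne_of_mem_of_not_mem hk hj, false_or]

theorem indepWeight_eq_mul_erase (z : α → ℝ) {s : Finset α} {j : α} (hj : j ∈ s) (S : Finset α) :
    indepWeight z s S = (if j ∈ S then z j else 1 - z j) * indepWeight z (s.erase j) S :=
  (mul_prod_erase s _ hj).symm

theorem indepWeight_univ [Fintype α] (z : α → ℝ) (S : Finset α) :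
    indepWeight z univ S = (∏ j ∈ S, z j) * ∏ j ∈ Sᶜ, (1 - z j) := by
  rw [indepWeight, prod_ite, filter_mem_eq_inter, univ_inter, filter_not, filter_mem_eq_inter,
    univ_inter, compl_eq_univ_sdiff]

theorem sum_indepWeight_univ [Fintype α] (z : α → ℝ) : ∑ S, indepWeight z univ S = 1 := by
  simp only [indepWeight_univ, ← Fintype.prod_add, add_sub_cancel, prod_const_one]

theorem hasDerivAt_indepWeight_smul [Fintype α] (x : α → ℝ) (S : Finset α) (t : ℝ) :
    HasDerivAt (fun t : ℝ => indepWeight (t • x) univ S)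
      (∑ j, indepWeight (t • x) (univ.erase j) S * (if j ∈ S then x j else -x j)) t := by
  have hfactor : ∀ j ∈ (univ : Finset α), HasDerivAt
      (fun t : ℝ => if j ∈ S then (t • x) j else 1 - (t • x) j)
      (if j ∈ S then x j else -x j) t := by
    intro j _
    split_ifs
    · simpa using hasDerivAt_mul_const (x j)
    · simpa using (hasDerivAt_mul_const (x j)).const_sub 1
  simpa [indepWeight] using HasDerivAt.fun_finsetProd hfactor

end IndepWeight

section InclusionProb

variable {α : Type*} [Fintype α] [DecidableEq α]

def inclusionProb (p : Finset α → ℝ) (j : α) : ℝ :=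
  ∑ S, if j ∈ S then p S else 0

theorem inclusionProb_mem_Icc {p : Finset α → ℝ} (hp : ∀ S, 0 ≤ p S) (hp1 : ∑ S, p S = 1)
    (j : α) : inclusionProb p j ∈ Set.Icc (0 : ℝ) 1 := by
  refine ⟨sum_nonneg fun S _ => ?_, hp1 ▸ sum_le_sum fun S _ => ?_⟩ <;>
    split_ifs <;> simp [hp S]

theorem sum_mul_sum_mem_eq_sum_inclusionProb (p : Finset α → ℝ) (a : α → ℝ) :
    ∑ S, p S * ∑ j ∈ S, a j = ∑ j, inclusionProb p j * a j := by
  simp only [inclusionProb, sum_mul, ite_mul, zero_mul, mul_sum]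
  rw [sum_comm]
  exact sum_congr rfl fun S _ => by rw [sum_ite_mem, univ_inter]

end InclusionProb

section MultilinearExt

variable {n : ℕ}

theorem multilinearExt_eq_sum_indepWeight (f : Finset (Fin n) → ℝ) (z : Fin n → ℝ) :
    multilinearExt f z = ∑ S, f S * indepWeight z univ S := by
  simp only [multilinearExt, indepWeight_univ]

theorem multilinearExt_zero (f : Finset (Fin n) → ℝ) : multilinearExt f 0 = f ∅ := by
  rw [multilinearExt, sum_eq_single ∅ (fun S _ hS => ?_) (by simp)]
  · simp
  · obtain ⟨j, hj⟩ := nonempty_iff_ne_empty.mpr hS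
    rw [prod_eq_zero hj rfl, zero_mul, mul_zero]

theorem multilinearExt_eq_sum_powerset_erase (f : Finset (Fin n) → ℝ) (z : Fin n → ℝ)
    (j : Fin n) :
    multilinearExt f z = ∑ S ∈ (univ.erase j).powerset,
      indepWeight z (univ.erase j) S * ((1 - z j) * f S + z j * f (insert j S)) := by
  rw [multilinearExt_eq_sum_indepWeight, sum_eq_sum_powerset_erase _ j]
  refine sum_congr rfl fun S hS => ?_
  have hjS : j ∉ S := fun h => notMem_erase j univ (mem_powerset.mp hS h)
  rw [indepWeight_eq_mul_erase z (mem_univ j), indepWeight_eq_mul_erase z (mem_univ j),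
    indepWeight_insert_of_notMem z (notMem_erase j univ), if_neg hjS,
    if_pos (mem_insert_self j S)]
  ring

/-- `∂F/∂z_j`: by `multilinearExt_eq_sum_powerset_erase`, `F` is affine in `z j` with this
slope. -/
noncomputable def multilinearExtPDeriv (f : Finset (Fin n) → ℝ) (j : Fin n) (z : Fin n → ℝ) :
    ℝ :=
  ∑ S ∈ (univ.erase j).powerset, indepWeight z (univ.erase j) S * marginalGain f j S

theorem multilinearExtPDeriv_nonneg {f : Finset (Fin n) → ℝ} (hf : Monotone f) {z : Fin n → ℝ}
    (hz : ∀ j, z j ∈ Set.Icc (0 : ℝ) 1) (j : Fin n) : 0 ≤ multilinearExtPDeriv f j z :=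
  sum_nonneg fun S _ => mul_nonneg (indepWeight_nonneg hz _ _) (marginalGain_nonneg hf j S)

theorem multilinearExt_marginalGain (f : Finset (Fin n) → ℝ) (z : Fin n → ℝ) (j : Fin n) :
    multilinearExt (marginalGain f j) z = (1 - z j) * multilinearExtPDeriv f j z := by
  rw [multilinearExt_eq_sum_powerset_erase _ z j, multilinearExtPDeriv, mul_sum]
  refine sum_congr rfl fun S _ => ?_
  rw [marginalGain_of_mem (mem_insert_self j S)]
  ring

theorem le_multilinearExt_add_sum_pDeriv {f : Finset (Fin n) → ℝ} (hmono : Monotone f)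
    (hsub : IsSubmodular f) {z : Fin n → ℝ} (hz : ∀ j, z j ∈ Set.Icc (0 : ℝ) 1)
    (S : Finset (Fin n)) :
    f S ≤ multilinearExt f z + ∑ j ∈ S, multilinearExtPDeriv f j z := by
  have hpoint : ∀ R, f S ≤ f R + ∑ j ∈ S, marginalGain f j R := fun R =>
    (hmono subset_union_right).trans (hsub.le_add_sum_marginalGain R S)
  calc f S = ∑ R, indepWeight z univ R * f S := by rw [← sum_mul, sum_indepWeight_univ, one_mul]
    _ ≤ ∑ R, indepWeight z univ R * (f R + ∑ j ∈ S, marginalGain f j R) :=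
        sum_le_sum fun R _ => mul_le_mul_of_nonneg_left (hpoint R) (indepWeight_nonneg hz _ R)
    _ = multilinearExt f z + ∑ j ∈ S, multilinearExt (marginalGain f j) z := by
        simp only [multilinearExt_eq_sum_indepWeight, mul_add, sum_add_distrib, mul_sum]
        rw [sum_comm (s := S)]
        simp only [mul_comm]
    _ ≤ multilinearExt f z + ∑ j ∈ S, multilinearExtPDeriv f j z := by
        gcongr with j
        rw [multilinearExt_marginalGain]
        nlinarith [multilinearExtPDeriv_nonneg hmono hz j, (hz j).1]

theorem sum_mul_le_multilinearExt_add {f : Finset (Fin n) → ℝ} (hmono : Monotone f)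
    (hsub : IsSubmodular f) {p : Finset (Fin n) → ℝ} (hp : ∀ S, 0 ≤ p S)
    (hp1 : ∑ S, p S = 1) {z : Fin n → ℝ} (hz : ∀ j, z j ∈ Set.Icc (0 : ℝ) 1) :
    ∑ S, p S * f S ≤
      multilinearExt f z + ∑ j, inclusionProb p j * multilinearExtPDeriv f j z :=
  calc ∑ S, p S * f S
      ≤ ∑ S, p S * (multilinearExt f z + ∑ j ∈ S, multilinearExtPDeriv f j z) :=
        sum_le_sum fun S _ =>
          mul_le_mul_of_nonneg_left (le_multilinearExt_add_sum_pDeriv hmono hsub hz S) (hp S)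
    _ = (∑ S, p S) * multilinearExt f z + ∑ S, p S * ∑ j ∈ S, multilinearExtPDeriv f j z := by
        rw [sum_mul, ← sum_add_distrib]
        simp only [mul_add]
    _ = _ := by rw [hp1, one_mul, sum_mul_sum_mem_eq_sum_inclusionProb]

theorem sum_mul_indepWeight_erase_mul (f : Finset (Fin n) → ℝ) (z x : Fin n → ℝ) (j : Fin n) :
    ∑ S, f S * (indepWeight z (univ.erase j) S * (if j ∈ S then x j else -x j)) =
      x j * multilinearExtPDeriv f j z := by
  rw [sum_eq_sum_powerset_erase _ j, multilinearExtPDeriv, mul_sum]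
  refine sum_congr rfl fun S hS => ?_
  have hjS : j ∉ S := fun h => notMem_erase j univ (mem_powerset.mp hS h)
  rw [indepWeight_insert_of_notMem z (notMem_erase j univ), if_neg hjS,
    if_pos (mem_insert_self j S), marginalGain]
  ring

theorem hasDerivAt_multilinearExt_smul (f : Finset (Fin n) → ℝ) (x : Fin n → ℝ) (t : ℝ) :
    HasDerivAt (fun t : ℝ => multilinearExt f (t • x))
      (∑ j, x j * multilinearExtPDeriv f j (t • x)) t := by
  simp only [multilinearExt_eq_sum_indepWeight]
  have := HasDerivAt.fun_sum fun S (_ : S ∈ univ) =>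
    (hasDerivAt_indepWeight_smul x S t).const_mul (f S)
  simp only [mul_sum] at this
  rwa [sum_comm, sum_congr rfl fun j _ => sum_mul_indepWeight_erase_mul f (t • x) x j] at this

end MultilinearExt

theorem le_exp_div_mul_of_le_add_deriv {φ φ' : ℝ → ℝ} {c : ℝ}
    (hφ : ∀ t ∈ Set.Icc (0 : ℝ) 1, HasDerivAt φ (φ' t) t)
    (hc : ∀ t ∈ Set.Icc (0 : ℝ) 1, c ≤ φ t + φ' t) (h0 : φ 0 = 0) :
    c ≤ Real.exp 1 / (Real.exp 1 - 1) * φ 1 := by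
  set ψ : ℝ → ℝ := fun t => Real.exp t * (φ t - c)
  have hψ : ∀ t ∈ Set.Icc (0 : ℝ) 1,
      HasDerivAt ψ (Real.exp t * (φ t - c) + Real.exp t * φ' t) t := fun t ht =>
    (Real.hasDerivAt_exp t).mul ((hφ t ht).sub_const c)
  have hmono : MonotoneOn ψ (Set.Icc 0 1) := by
    refine monotoneOn_of_hasDerivWithinAt_nonneg (convex_Icc 0 1)
      (fun t ht => (hψ t ht).continuousAt.continuousWithinAt)
      (fun t ht => (hψ t (interior_subset ht)).hasDerivWithinAt) fun t ht => ?_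
    have := hc t (interior_subset ht)
    rw [← mul_add]
    exact mul_nonneg (Real.exp_pos t).le (by linarith)
  have h01 : ψ 0 ≤ ψ 1 := hmono (by norm_num) (by norm_num) zero_le_one
  have he : 1 < Real.exp 1 := Real.one_lt_exp_iff.mpr one_pos
  simp only [ψ, h0, Real.exp_zero] at h01
  rw [div_mul_eq_mul_div, le_div_iff₀ (by linarith)]
  linarith

/-- (Correlation gap.)  Let `f` be monotone submodular with
`f ∅ = 0`, let `p` be any probability distribution over subsets of `X`, and let
`x_j = Pr_{S∼p}[j ∈ S]` be the vector of marginals.  Then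
`E_{S∼p}[f(S)] ≤ (e/(e-1)) F(x)`, where `F` is the multilinear extension of `f`. -/
theorem stmt_16 {n : ℕ} (f : Finset (Fin n) → ℝ)
    (hmono : ∀ A B : Finset (Fin n), A ⊆ B → f A ≤ f B)
    (hsub : ∀ A B : Finset (Fin n), A ⊆ B → ∀ i ∉ B,
      f (insert i A) - f A ≥ f (insert i B) - f B)
    (hempty : f ∅ = 0)
    (p : Finset (Fin n) → ℝ) (hp : ∀ S, 0 ≤ p S) (hp1 : ∑ S : Finset (Fin n), p S = 1) :
    (∑ S : Finset (Fin n), p S * f S) ≤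
      (Real.exp 1 / (Real.exp 1 - 1)) *
        multilinearExt f (fun j => ∑ S : Finset (Fin n), if j ∈ S then p S else 0) := by
  show _ ≤ _ * multilinearExt f (inclusionProb p)
  have hf_mono : Monotone f := fun A B => hmono A B
  have hf_sub : IsSubmodular f := hsub
  have hx := inclusionProb_mem_Icc hp hp1
  have hline : ∀ t ∈ Set.Icc (0 : ℝ) 1, ∀ j, (t • inclusionProb p) j ∈ Set.Icc (0 : ℝ) 1 :=
    fun t ht j => ⟨mul_nonneg ht.1 (hx j).1, mul_le_one₀ ht.2 (hx j).1 (hx j).2⟩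
  have h0 : multilinearExt f ((0 : ℝ) • inclusionProb p) = 0 := by
    rw [zero_smul, multilinearExt_zero, hempty]
  simpa only [one_smul] using le_exp_div_mul_of_le_add_deriv
    (fun t _ => hasDerivAt_multilinearExt_smul f (inclusionProb p) t)
    (fun t ht => sum_mul_le_multilinearExt_add hf_mono hf_sub hp hp1 (hline t ht)) h0
end

section
/- Let f : 2^X → ℝ be a submodular function on a finite ground set X with |X| = n. Then its multilinear extension F : [0,1]^n → ℝ is up-concave: for every x ∈ [0,1]^n and every direction d ∈ ℝ^n with d ⪰ 0 coordinatewise, the map ξ ↦ F(x + ξd) is concave on the interval of ξ ≥ 0 for which x + ξd ∈ [0,1]^n. -/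
/-!
Along the line `t ↦ x + t • d`, the multilinear extension over a ground set `T` has derivative
`∑ i ∈ T, d i * F_{T \ {i}}(marginal i f)`, a formula of the same shape that can be
differentiated again. The second derivative is therefore a combination, with coefficients
`d i * d k ≥ 0` (`i ≠ k`), of multilinear extensions of the second differences
`f (S ∪ {i, k}) - f (S ∪ {k}) - f (S ∪ {i}) + f S`, which are `≤ 0` by submodularity. Inside
`[0,1]^n` the weights of a multilinear extension are nonnegative, so the second derivative is
`≤ 0` wherever `x + t • d ∈ [0,1]^n`.
-/

open Finset

namespace MultilinearExt

variable {α : Type*} [DecidableEq α]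

/-- The probability that a random set, containing each `j ∈ T` independently with probability
`z j`, has trace `S` on `T`. -/
noncomputable def weight (T S : Finset α) (z : α → ℝ) : ℝ :=
  ∏ j ∈ T, if j ∈ S then z j else 1 - z j

noncomputable def extOn (T : Finset α) (h : Finset α → ℝ) (z : α → ℝ) : ℝ :=
  ∑ S ∈ T.powerset, h S * weight T S z

def marginal (i : α) (h : Finset α → ℝ) (S : Finset α) : ℝ :=
  h (insert i S) - h S

def IsSubmodular (h : Finset α → ℝ) : Prop :=
  ∀ A B : Finset α, A ⊆ B → ∀ i ∉ B, marginal i h A ≥ marginal i h B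

lemma weight_nonneg (T S : Finset α) {z : α → ℝ} (hz : z ∈ Set.Icc 0 1) :
    0 ≤ weight T S z :=
  prod_nonneg fun j _ => by
    split_ifs
    · exact hz.1 j
    · exact sub_nonneg.2 (hz.2 j)

lemma weight_insert_of_notMem {T : Finset α} {i : α} (hi : i ∉ T) (S : Finset α)
    (z : α → ℝ) : weight T (insert i S) z = weight T S z :=
  prod_congr rfl fun j hj => by simp only [mem_insert, ne_of_mem_of_not_mem hj hi, false_or]

lemma extOn_nonpos {T : Finset α} {h : Finset α → ℝ} {z : α → ℝ}
    (hz : z ∈ Set.Icc 0 1) (hh : ∀ S ⊆ T, h S ≤ 0) : extOn T h z ≤ 0 :=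
  sum_nonpos fun S hS =>
    mul_nonpos_of_nonpos_of_nonneg (hh S (mem_powerset.1 hS)) (weight_nonneg T S hz)

lemma hasDerivAt_weight_line (T S : Finset α) (x d : α → ℝ) (t : ℝ) :
    HasDerivAt (fun t => weight T S (x + t • d))
      (∑ i ∈ T, (if i ∈ S then d i else -d i) * weight (T.erase i) S (x + t • d)) t := by
  have hline : ∀ j, HasDerivAt (fun t : ℝ => (x + t • d) j) (d j) t := fun j => by
    simpa using ((hasDerivAt_id t).mul_const (d j)).const_add (x j)
  have hfactor : ∀ j, HasDerivAt
      (fun t : ℝ => if j ∈ S then (x + t • d) j else 1 - (x + t • d) j)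
      (if j ∈ S then d j else -d j) t := fun j => by
    split_ifs
    · exact hline j
    · exact (hline j).const_sub 1
  refine (HasDerivAt.fun_finsetProd fun j (_ : j ∈ T) => hfactor j).congr_deriv ?_
  exact sum_congr rfl fun i _ => by rw [smul_eq_mul, mul_comm, weight]

/-- The terms for `S` and `insert i S`, with `i ∉ S`, combine into the marginal gain of `i`
at `S`. -/
lemma sum_powerset_signed_weight {T : Finset α} {i : α} (hi : i ∈ T) (h : Finset α → ℝ)
    (z : α → ℝ) (c : ℝ) :
    ∑ S ∈ T.powerset, h S * ((if i ∈ S then c else -c) * weight (T.erase i) S z) =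
      c * extOn (T.erase i) (marginal i h) z := by
  have hi' : i ∉ T.erase i := notMem_erase i T
  rw [← insert_erase hi, sum_powerset_insert hi', erase_insert hi', extOn, mul_sum,
    ← sum_add_distrib]
  refine sum_congr rfl fun S hS => ?_
  have hiS : i ∉ S := fun h => hi' (mem_powerset.1 hS h)
  rw [if_neg hiS, if_pos (mem_insert_self i S), weight_insert_of_notMem hi', marginal]
  ring

lemma hasDerivAt_extOn_line (T : Finset α) (h : Finset α → ℝ) (x d : α → ℝ) (t : ℝ) :
    HasDerivAt (fun t => extOn T h (x + t • d))
      (∑ i ∈ T, d i * extOn (T.erase i) (marginal i h) (x + t • d)) t := by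
  refine (HasDerivAt.fun_sum fun S (_ : S ∈ T.powerset) =>
    (hasDerivAt_weight_line T S x d t).const_mul (h S)).congr_deriv ?_
  simp_rw [mul_sum]
  rw [sum_comm]
  exact sum_congr rfl fun i hi => sum_powerset_signed_weight hi h _ (d i)

lemma marginal_marginal_nonpos {h : Finset α → ℝ} (hsub : IsSubmodular h) {i k : α}
    {S : Finset α} (hik : i ≠ k) (hi : i ∉ S) :
    marginal k (marginal i h) S ≤ 0 := by
  have hiB : i ∉ insert k S := by simp [hik, hi]
  have := hsub S (insert k S) (subset_insert k S) i hiB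
  simp only [marginal] at this ⊢
  linarith

lemma concaveOn_extOn_line {T : Finset α} {h : Finset α → ℝ} (hsub : IsSubmodular h)
    (x : α → ℝ) {d : α → ℝ} (hd : 0 ≤ d) :
    ConcaveOn ℝ {t : ℝ | x + t • d ∈ Set.Icc 0 1} (fun t => extOn T h (x + t • d)) := by
  have hconvex : Convex ℝ {t : ℝ | x + t • d ∈ Set.Icc 0 1} := by
    intro t₁ h₁ t₂ h₂ a b ha hb hab
    show x + (a • t₁ + b • t₂) • d ∈ Set.Icc 0 1
    convert (convex_Icc (0 : α → ℝ) 1) h₁ h₂ ha hb hab using 1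
    linear_combination (norm := module) -hab • x
  refine concaveOn_of_hasDerivWithinAt2_nonpos hconvex
    (fun t _ => (hasDerivAt_extOn_line T h x d t).continuousAt.continuousWithinAt)
    (fun t _ => (hasDerivAt_extOn_line T h x d t).hasDerivWithinAt)
    (fun t _ => (HasDerivAt.fun_sum fun i _ =>
      (hasDerivAt_extOn_line _ _ x d t).const_mul (d i)).hasDerivWithinAt) ?_
  intro t ht
  refine sum_nonpos fun i hi => mul_nonpos_of_nonneg_of_nonpos (hd i) ?_
  refine sum_nonpos fun k hk => mul_nonpos_of_nonneg_of_nonpos (hd k) ?_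
  have hz : t ∈ {t : ℝ | x + t • d ∈ Set.Icc 0 1} := interior_subset ht
  refine extOn_nonpos hz fun S hS => marginal_marginal_nonpos hsub ?_ ?_
  · exact (ne_of_mem_erase hk).symm
  · exact fun hiS => notMem_erase i T (mem_of_mem_erase (hS hiS))

lemma multilinearExt_eq_extOn_univ {n : ℕ} (f : Finset (Fin n) → ℝ) (z : Fin n → ℝ) :
    multilinearExt f z = extOn univ f z := by
  rw [multilinearExt, extOn, powerset_univ]
  refine sum_congr rfl fun S _ => ?_
  rw [weight, prod_ite, filter_mem_eq_inter, univ_inter, compl_eq_univ_sdiff,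
    ← filter_notMem_eq_sdiff]

end MultilinearExt

open MultilinearExt

/-- The multilinear extension `F` of a submodular function `f` is
up-concave: for every `x ∈ [0,1]^n` and every direction `d ⪰ 0`, the map
`ξ ↦ F(x + ξ d)` is concave on the set of `ξ ≥ 0` for which `x + ξ d ∈ [0,1]^n`. -/
theorem stmt_17 {n : ℕ} (f : Finset (Fin n) → ℝ)
    (hsub : ∀ A B : Finset (Fin n), A ⊆ B → ∀ i ∉ B,
      f (insert i A) - f A ≥ f (insert i B) - f B) :
    ∀ x ∈ Set.Icc (0 : Fin n → ℝ) 1, ∀ d : Fin n → ℝ, 0 ≤ d →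
      ∀ ξ₁ ξ₂ : ℝ, 0 ≤ ξ₁ → 0 ≤ ξ₂ →
        x + ξ₁ • d ∈ Set.Icc (0 : Fin n → ℝ) 1 →
        x + ξ₂ • d ∈ Set.Icc (0 : Fin n → ℝ) 1 →
        ∀ l : ℝ, 0 ≤ l → l ≤ 1 →
          multilinearExt f (x + (l * ξ₁ + (1 - l) * ξ₂) • d) ≥
            l * multilinearExt f (x + ξ₁ • d) +
              (1 - l) * multilinearExt f (x + ξ₂ • d) := by
  intro x _ d hd ξ₁ ξ₂ _ _ h₁ h₂ l hl₀ hl₁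
  have hconc := concaveOn_extOn_line (T := univ) (h := f) hsub x hd
  simpa only [multilinearExt_eq_extOn_univ, smul_eq_mul] using
    hconc.2 h₁ h₂ hl₀ (sub_nonneg.2 hl₁) (add_sub_cancel l 1)
end
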